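/- For all integers n ≥ 0 and k ≥ 1, the total number of k-down steps, summed over all Dyck paths from (0,0) to (n,0), equals the number of (2k+1)-tuples (p₀, p₁, …, p₂ₖ) of Dyck paths whose lengths sum to n − 2k (in particular both quantities are 0 when n < 2k or n is odd). -/

import Mathlib

/-!
Let `G_h = heightSeries h = ∑ₙ #(gdPaths n h) xⁿ`. Cutting a path ending at height `h + 1`
at the up step that follows its last visit to the x-axis gives `G_{h+1} = x · G_0 · G_h`,
hence `G_h = x^h · G_0^(h+1)`. Cutting a Dyck path at a `k`-down step leaves a path to
height `k` and, read backwards, a path to height `k - 1`; so the number of `k`-down steps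
over all Dyck paths of length `n` is the coefficient of `xⁿ` in
`x · G_k · G_{k-1} = x^(2k) · G_0^(2k+1)`, and expanding the power gives the sum over
`(2k+1)`-tuples.
-/

open Finset

attribute [local instance] Classical.propDecidable

/-- The height of the lattice path `p` (where `true` is a northeast step `(1,1)` and
`false` is a southeast step `(1,-1)`) after its first `i` steps. -/
def pathHeight {n : ℕ} (p : Fin n → Bool) (i : ℕ) : ℤ :=
  ∑ j ∈ Finset.univ.filter (fun j : Fin n => (j : ℕ) < i), (if p j then (1 : ℤ) else -1)

/-- `p` is a generalized Dyck path from `(0,0)` to `(n,h)`: it ends at height `h`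
and never goes below the x-axis. -/
def IsGDPath {n : ℕ} (h : ℤ) (p : Fin n → Bool) : Prop :=
  pathHeight p n = h ∧ ∀ i ≤ n, 0 ≤ pathHeight p i

/-- The set of generalized Dyck paths from `(0,0)` to `(n,h)`. -/
noncomputable def gdPaths (n : ℕ) (h : ℤ) : Finset (Fin n → Bool) :=
  Finset.univ.filter (IsGDPath h)

/-- The number of `k`-down steps of `p`, i.e. southeast steps from height `k` to `k-1`. -/
noncomputable def downSteps {n : ℕ} (k : ℤ) (p : Fin n → Bool) : ℕ :=
  (Finset.univ.filter (fun i : Fin n => p i = false ∧ pathHeight p (i : ℕ) = k)).card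

/-- Binomial coefficient on integers, `0` unless `0 ≤ b ≤ a`. -/
def binom (a b : ℤ) : ℤ :=
  if 0 ≤ b ∧ b ≤ a then (a.toNat.choose b.toNat : ℤ) else 0

open PowerSeries

section Height

variable {n : ℕ}

lemma pathHeight_zero (p : Fin n → Bool) : pathHeight p 0 = 0 := by
  simp [pathHeight]

lemma pathHeight_of_le (p : Fin n → Bool) {m : ℕ} (h : n ≤ m) :
    pathHeight p m = pathHeight p n := by
  unfold pathHeight
  rw [filter_true_of_mem fun j _ => j.isLt.trans_le h, filter_true_of_mem fun j _ => j.isLt]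

lemma pathHeight_succ (p : Fin n → Bool) {i : ℕ} (h : i < n) :
    pathHeight p (i + 1) = pathHeight p i + if p ⟨i, h⟩ then 1 else -1 := by
  unfold pathHeight
  rw [show univ.filter (fun j : Fin n => (j : ℕ) < i + 1)
      = insert ⟨i, h⟩ (univ.filter fun j : Fin n => (j : ℕ) < i) by
      ext j; simp [Fin.ext_iff]; omega,
    sum_insert (by simp), add_comm]

lemma mem_gdPaths {h : ℤ} {p : Fin n → Bool} :
    p ∈ gdPaths n h ↔ pathHeight p n = h ∧ ∀ i ≤ n, 0 ≤ pathHeight p i := by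
  simp [gdPaths, IsGDPath]

end Height

section Glue

variable {n c : ℕ}

def glue (c : ℕ) (q : Fin c → Bool) (b : Bool) (r : Fin (n - 1 - c) → Bool) :
    Fin n → Bool :=
  fun j => if h : (j : ℕ) < c then q ⟨j, h⟩ else if h' : (j : ℕ) = c then b
    else r ⟨j - (c + 1), by have := j.isLt; omega⟩

lemma glue_apply_of_lt (q : Fin c → Bool) (b : Bool) (r : Fin (n - 1 - c) → Bool) {j : Fin n}
    (hj : (j : ℕ) < c) : glue c q b r j = q ⟨j, hj⟩ := by
  simp [glue, hj]

lemma glue_apply_of_eq (q : Fin c → Bool) (b : Bool) (r : Fin (n - 1 - c) → Bool) {j : Fin n}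
    (hj : (j : ℕ) = c) : glue c q b r j = b := by
  simp [glue, hj]

lemma glue_apply_add (q : Fin c → Bool) (b : Bool) (r : Fin (n - 1 - c) → Bool)
    (s : Fin (n - 1 - c)) : glue c q b r ⟨c + 1 + s, by omega⟩ = r s := by
  have h₁ : ¬ c + 1 + (s : ℕ) < c := by omega
  have h₂ : c + 1 + (s : ℕ) ≠ c := by omega
  simp [glue, h₁, h₂]

def glueEquiv (hc : c < n) :
    (Fin c → Bool) × Bool × (Fin (n - 1 - c) → Bool) ≃ (Fin n → Bool) where
  toFun x := glue c x.1 x.2.1 x.2.2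
  invFun p := (fun j => p ⟨j, by omega⟩, p ⟨c, hc⟩, fun s => p ⟨c + 1 + s, by omega⟩)
  left_inv := fun ⟨q, b, r⟩ => by
    ext j
    · exact glue_apply_of_lt q b r j.isLt
    · exact glue_apply_of_eq q b r rfl
    · exact glue_apply_add q b r j
  right_inv p := by
    funext j
    simp only [glue]
    split_ifs <;> congr 1 <;> ext <;> simp <;> omega

lemma glueEquiv_apply (hc : c < n) (x : (Fin c → Bool) × Bool × (Fin (n - 1 - c) → Bool)) :
    glueEquiv hc x = glue c x.1 x.2.1 x.2.2 := rfl

variable (q : Fin c → Bool) (b : Bool) (r : Fin (n - 1 - c) → Bool)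

lemma pathHeight_glue_of_le (hc : c < n) {t : ℕ} (ht : t ≤ c) :
    pathHeight (glue c q b r) t = pathHeight q t := by
  induction t with
  | zero => simp only [pathHeight_zero]
  | succ t ih =>
    rw [pathHeight_succ _ (by omega), pathHeight_succ q ht, ih (by omega),
      glue_apply_of_lt q b r (by exact ht)]

lemma pathHeight_glue_add (hc : c < n) {s : ℕ} (hs : s ≤ n - 1 - c) :
    pathHeight (glue c q b r) (c + 1 + s) =
      pathHeight q c + (if b then 1 else -1) + pathHeight r s := by
  induction s with
  | zero =>
    rw [pathHeight_zero, add_zero, add_zero, pathHeight_succ _ hc,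
      pathHeight_glue_of_le q b r hc le_rfl, glue_apply_of_eq q b r rfl]
  | succ s ih =>
    rw [← add_assoc, pathHeight_succ _ (by omega), ih (by omega), pathHeight_succ r (by omega),
      glue_apply_add q b r ⟨s, by omega⟩, add_assoc]

lemma pathHeight_glue_length (hc : c < n) :
    pathHeight (glue c q b r) n =
      pathHeight q c + (if b then 1 else -1) + pathHeight r (n - 1 - c) := by
  rw [← pathHeight_glue_add q b r hc le_rfl]
  congr 1
  omega

lemma forall_pathHeight_glue_gt_iff (hc : c < n) (P : ℤ → Prop) :
    (∀ t, c < t → t ≤ n → P (pathHeight (glue c q b r) t)) ↔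
      ∀ s ≤ n - 1 - c, P (pathHeight q c + (if b then 1 else -1) + pathHeight r s) := by
  constructor
  · intro h s hs
    rw [← pathHeight_glue_add q b r hc hs]
    exact h _ (by omega) (by omega)
  · intro h t hct htn
    obtain ⟨s, rfl⟩ : ∃ s, t = c + 1 + s := ⟨t - (c + 1), by omega⟩
    rw [pathHeight_glue_add q b r hc (by omega)]
    exact h s (by omega)

lemma forall_pathHeight_glue_iff (hc : c < n) (P : ℤ → Prop) :
    (∀ t ≤ n, P (pathHeight (glue c q b r) t)) ↔
      (∀ t ≤ c, P (pathHeight q t)) ∧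
        ∀ s ≤ n - 1 - c, P (pathHeight q c + (if b then 1 else -1) + pathHeight r s) := by
  rw [← forall_pathHeight_glue_gt_iff q b r hc]
  constructor
  · intro h
    refine ⟨fun t ht => ?_, fun t _ htn => h t htn⟩
    rw [← pathHeight_glue_of_le q b r hc ht]
    exact h t (by omega)
  · rintro ⟨hle, hgt⟩ t htn
    rcases le_or_gt t c with htc | htc
    · rw [pathHeight_glue_of_le q b r hc htc]
      exact hle t htc
    · exact hgt t htc htn

end Glue

section Reverse

variable {m : ℕ}

def reversePath (r : Fin m → Bool) : Fin m → Bool := fun j => !r j.rev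

lemma reversePath_involutive : Function.Involutive (reversePath (m := m)) := by
  intro r
  funext j
  simp [reversePath]

lemma pathHeight_reversePath (r : Fin m → Bool) {t : ℕ} (ht : t ≤ m) :
    pathHeight (reversePath r) t = pathHeight r (m - t) - pathHeight r m := by
  induction t with
  | zero => simp [pathHeight_zero]
  | succ t ih =>
    obtain ⟨u, hu⟩ : ∃ u, m - t = u + 1 := ⟨m - t - 1, by omega⟩
    have hrev : (Fin.rev ⟨t, by omega⟩ : Fin m) = ⟨u, by omega⟩ := by
      ext
      simp [Fin.val_rev]
      omega
    rw [pathHeight_succ _ (by omega), ih (by omega), hu, pathHeight_succ r (by omega),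
      show m - (t + 1) = u by omega, reversePath, hrev]
    cases r ⟨u, _⟩ <;> simp <;> ring

lemma forall_pathHeight_reversePath_iff (r : Fin m → Bool) (P : ℤ → Prop) :
    (∀ s ≤ m, P (pathHeight (reversePath r) s)) ↔
      ∀ s ≤ m, P (pathHeight r s - pathHeight r m) := by
  constructor
  · intro h s hs
    simpa [pathHeight_reversePath r (Nat.sub_le m s), Nat.sub_sub_self hs] using
      h (m - s) (by omega)
  · intro h s hs
    rw [pathHeight_reversePath r hs]
    exact h (m - s) (by omega)

end Reverse

section Decomposition

variable {n : ℕ}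

lemma card_downStep_fiber (k : ℕ) (i : Fin n) :
    #{p ∈ gdPaths n 0 | p i = false ∧ pathHeight p i = ((k + 1 : ℕ) : ℤ)} =
      #(gdPaths i ((k + 1 : ℕ) : ℤ)) * #(gdPaths (n - 1 - i) k) := by
  rw [show #(gdPaths i ((k + 1 : ℕ) : ℤ)) * #(gdPaths (n - 1 - i) k) =
      #(gdPaths i ((k + 1 : ℕ) : ℤ) ×ˢ ({false} ×ˢ gdPaths (n - 1 - i) k)) by
    simp [card_product]]
  symm
  refine card_equiv (((Equiv.refl _).prodCongr
    ((Equiv.refl _).prodCongr reversePath_involutive.toPerm)).trans (glueEquiv i.isLt)) ?_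
  rintro ⟨q, b, r⟩
  simp only [mem_product, mem_singleton, mem_filter, mem_gdPaths, Equiv.trans_apply,
    Equiv.prodCongr_apply, Equiv.coe_refl, Prod.map, id, Function.Involutive.coe_toPerm,
    glueEquiv_apply]
  rw [glue_apply_of_eq _ _ _ rfl, pathHeight_glue_of_le _ _ _ i.isLt le_rfl,
    pathHeight_glue_length _ _ _ i.isLt, forall_pathHeight_glue_iff _ _ _ i.isLt (0 ≤ ·),
    forall_pathHeight_reversePath_iff r (fun h => 0 ≤ pathHeight q i + _ + h),
    pathHeight_reversePath r le_rfl, Nat.sub_self, pathHeight_zero]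
  cases b
  · simp only [Bool.false_eq_true, if_false, true_and, Nat.cast_succ]
    constructor
    · rintro ⟨⟨hq, hqnn⟩, hr, hrnn⟩
      exact ⟨⟨by omega, hqnn, fun s hs => by have := hrnn s hs; omega⟩, hq⟩
    · rintro ⟨⟨hend, hqnn, hnn⟩, hq⟩
      exact ⟨⟨hq, hqnn⟩, by omega, fun s hs => by have := hnn s hs; omega⟩
  · simp

noncomputable def lastZero (p : Fin n → Bool) : ℕ :=
  Nat.findGreatest (fun t => pathHeight p t = 0) n

lemma lastZero_eq_iff {p : Fin n → Bool} {c : ℕ} :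
    lastZero p = c ↔
      c ≤ n ∧ pathHeight p c = 0 ∧ ∀ t, c < t → t ≤ n → pathHeight p t ≠ 0 := by
  rw [lastZero, Nat.findGreatest_eq_iff]
  rcases Nat.eq_zero_or_pos c with rfl | hc
  · simp [pathHeight_zero]
  · simp [hc.ne']

lemma lastZero_lt {h : ℤ} (hh : h ≠ 0) {p : Fin n → Bool} (hp : p ∈ gdPaths n h) :
    lastZero p < n := by
  refine (Nat.findGreatest_le n).lt_of_ne fun heq => hh ?_
  have hzero : pathHeight p (lastZero p) = 0 :=
    Nat.findGreatest_spec (P := fun t => pathHeight p t = 0) (Nat.zero_le n) (pathHeight_zero p)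
  rw [← (mem_gdPaths.1 hp).1, ← hzero, lastZero, heq]

lemma card_lastZero_fiber (k : ℕ) {c : ℕ} (hc : c < n) :
    #{p ∈ gdPaths n ((k + 1 : ℕ) : ℤ) | lastZero p = c} =
      #(gdPaths c 0) * #(gdPaths (n - 1 - c) k) := by
  rw [show #(gdPaths c 0) * #(gdPaths (n - 1 - c) k) =
      #(gdPaths c 0 ×ˢ ({true} ×ˢ gdPaths (n - 1 - c) k)) by
    simp [card_product]]
  symm
  refine card_equiv (glueEquiv hc) ?_
  rintro ⟨q, b, r⟩
  simp only [mem_product, mem_singleton, mem_filter, mem_gdPaths, glueEquiv_apply]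
  rw [lastZero_eq_iff, pathHeight_glue_of_le _ _ _ hc le_rfl, pathHeight_glue_length _ _ _ hc,
    forall_pathHeight_glue_iff _ _ _ hc (0 ≤ ·),
    forall_pathHeight_glue_gt_iff _ _ _ hc (· ≠ 0)]
  cases b
  · simp only [Bool.false_eq_true, if_false, false_and, and_false, false_iff, not_and]
    rintro ⟨-, -, hnn⟩ - hq -
    have := hnn 0 (Nat.zero_le _)
    rw [pathHeight_zero] at this
    omega
  · simp only [if_true, true_and, Nat.cast_succ]
    constructor
    · rintro ⟨⟨hq, hqnn⟩, hr, hrnn⟩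
      refine ⟨⟨by omega, hqnn, fun s hs => ?_⟩, hc.le, hq, fun s hs => ?_⟩ <;>
        · have := hrnn s hs
          omega
    · rintro ⟨⟨hend, hqnn, hnn⟩, -, hq, hpos⟩
      refine ⟨⟨hq, hqnn⟩, by omega, fun s hs => ?_⟩
      have := hnn s hs
      have := hpos s hs
      omega

lemma card_gdPaths_succ (n k : ℕ) :
    #(gdPaths n ((k + 1 : ℕ) : ℤ)) =
      ∑ c ∈ range n, #(gdPaths c 0) * #(gdPaths (n - 1 - c) k) := by
  rw [card_eq_sum_card_fiberwise fun p hp => mem_range.2 (lastZero_lt (by omega) hp)]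
  exact sum_congr rfl fun c hc => card_lastZero_fiber k (mem_range.1 hc)

end Decomposition

section Series

variable {R : Type*} [CommSemiring R]

lemma coeff_X_mul_mul (f g : R⟦X⟧) (n : ℕ) :
    coeff n (X * f * g) = ∑ c ∈ range n, coeff c f * coeff (n - 1 - c) g := by
  rcases n with _ | n
  · simp [mul_assoc]
  · rw [mul_assoc, coeff_succ_X_mul, coeff_mul, Nat.sum_antidiagonal_eq_sum_range_succ_mk]
    simp only [Nat.add_sub_cancel]

lemma coeff_X_pow_mul_pow (φ : R⟦X⟧) (j m n : ℕ) :
    coeff n (X ^ j * φ ^ m) =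
      ∑ f ∈ (Fintype.piFinset fun _ : Fin m => range (n + 1)) |>.filter
          (fun f => (∑ i, f i) + j = n), ∏ i, coeff (f i) φ := by
  rw [coeff_X_pow_mul', ← Fin.prod_const, coeff_prod]
  split_ifs with hj
  · refine sum_equiv Finsupp.equivFunOnFinite (fun l => ?_) fun _ _ => rfl
    simp only [mem_finsuppAntidiag, mem_filter, Fintype.mem_piFinset, mem_range,
      Finsupp.equivFunOnFinite_apply, subset_univ, and_true]
    change (∑ i, l i) = n - j ↔ _
    refine ⟨fun h => ⟨fun a => ?_, by omega⟩, fun h => by omega⟩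
    have := single_le_sum (fun i _ => Nat.zero_le (l i)) (mem_univ a)
    omega
  · rw [filter_false_of_mem fun f _ => by omega, sum_empty]

end Series

noncomputable def heightSeries (h : ℕ) : ℕ⟦X⟧ := PowerSeries.mk fun n => #(gdPaths n h)

lemma heightSeries_succ (k : ℕ) :
    heightSeries (k + 1) = X * heightSeries 0 * heightSeries k := by
  ext n
  rw [coeff_X_mul_mul, heightSeries, coeff_mk, card_gdPaths_succ]
  simp [heightSeries]

lemma heightSeries_eq (k : ℕ) : heightSeries k = X ^ k * heightSeries 0 ^ (k + 1) := by
  induction k with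
  | zero => simp
  | succ k ih =>
    rw [heightSeries_succ, ih]
    ring

lemma sum_downSteps_eq_coeff (n k : ℕ) :
    ∑ p ∈ gdPaths n 0, downSteps ((k + 1 : ℕ) : ℤ) p =
      coeff n (X * heightSeries (k + 1) * heightSeries k) := by
  calc ∑ p ∈ gdPaths n 0, downSteps ((k + 1 : ℕ) : ℤ) p
      = ∑ i : Fin n,
          #{p ∈ gdPaths n 0 | p i = false ∧ pathHeight p i = ((k + 1 : ℕ) : ℤ)} := by
        simp only [downSteps, card_filter]
        exact sum_comm
    _ = ∑ c ∈ range n, #(gdPaths c ((k + 1 : ℕ) : ℤ)) * #(gdPaths (n - 1 - c) k) := by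
        rw [← Fin.sum_univ_eq_sum_range]
        exact sum_congr rfl fun i _ => card_downStep_fiber k i
    _ = coeff n (X * heightSeries (k + 1) * heightSeries k) := by
        simp [coeff_X_mul_mul, heightSeries]

/-- The total number of k-down steps over all Dyck paths from (0,0) to (n,0) equals
the number of (2k+1)-tuples of Dyck paths whose lengths sum to n − 2k
(in particular both quantities are 0 when n < 2k or n is odd). -/
theorem stmt6 (n k : ℕ) (hk : 1 ≤ k) :
    (∑ p ∈ gdPaths n 0, downSteps (k : ℤ) p) =
      ∑ f ∈ (Fintype.piFinset fun _ : Fin (2 * k + 1) => Finset.range (n + 1)) |>.filter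
          (fun f => (∑ i, f i) + 2 * k = n),
        ∏ i, (gdPaths (f i) 0).card := by
  obtain ⟨k, rfl⟩ := Nat.exists_eq_add_of_le' hk
  have hDyck (m : ℕ) : #(gdPaths m 0) = coeff m (heightSeries 0) := by simp [heightSeries]
  simp only [hDyck]
  rw [sum_downSteps_eq_coeff, ← coeff_X_pow_mul_pow, heightSeries_eq (k + 1),
    heightSeries_eq k]
  congr 1
  ring
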